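/- For every real scale t and every h = (a,b) ∈ ℍ_t: ⟨h, h⟩_t = |a|² − t·|b|² = det([h]_t); consequently ⟨h, h⟩_t = 0 if and only if |a|² = t·|b|², if and only if h is not invertible in ℍ_t (i.e. h has no two-sided ·_t-inverse). Thus {h ∈ ℍ_t : ⟨h,h⟩_t = 0} is exactly the set of non-invertible elements of ℍ_t. -/

import Mathlib

noncomputable section

open ComplexConjugate

/-- The `t`-scaled vector multiplication on `ℂ × ℂ` (the ring `ℍ_t`). -/
def hmul (t : ℝ) (h₁ h₂ : ℂ × ℂ) : ℂ × ℂ :=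
  (h₁.1 * h₂.1 + (t : ℂ) * h₁.2 * conj h₂.2, h₁.1 * h₂.2 + h₁.2 * conj h₂.1)

/-- The realization `π_t : ℍ_t → M₂(ℂ)`. -/
def pit (t : ℝ) (h : ℂ × ℂ) : Matrix (Fin 2) (Fin 2) ℂ :=
  !![h.1, (t : ℂ) * h.2; conj h.2, conj h.1]

/-- The hypercomplex conjugate `(a,b)† = (conj a, -b)`. -/
def hdag (h : ℂ × ℂ) : ℂ × ℂ := (conj h.1, -h.2)

/-- The linear functional `τ((a,b)) = Re a`, composed with `·_t`-multiplication:
the bilinear form `⟨h₁,h₂⟩_t = τ(h₁ ·_t h₂†)`. -/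
def hform (t : ℝ) (h₁ h₂ : ℂ × ℂ) : ℝ := (hmul t h₁ (hdag h₂)).1.re

/-! `h ·_t h† = h† ·_t h = (N_t h, 0)` for the norm `N_t (a,b) = |a|² − t|b|²`, which is also
`det [h]_t`. Since `π_t` is multiplicative, an inverse forces `N_t h ≠ 0`; conversely, if
`N_t h ≠ 0` then `(N_t h)⁻¹ • h†` is a two-sided inverse. -/

def hnorm (t : ℝ) (h : ℂ × ℂ) : ℝ := Complex.normSq h.1 - t * Complex.normSq h.2

section

variable (t : ℝ)

lemma ofReal_hnorm (h : ℂ × ℂ) :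
    (hnorm t h : ℂ) = h.1 * conj h.1 - t * h.2 * conj h.2 := by
  rw [hnorm, Complex.ofReal_sub, Complex.ofReal_mul, mul_assoc, Complex.mul_conj,
    Complex.mul_conj]

lemma hmul_hdag_self (h : ℂ × ℂ) : hmul t h (hdag h) = ((hnorm t h : ℂ), 0) := by
  simp only [hmul, hdag, ofReal_hnorm, map_neg, Complex.conj_conj, Prod.mk.injEq]
  constructor <;> ring

lemma hdag_hmul_self (h : ℂ × ℂ) : hmul t (hdag h) h = ((hnorm t h : ℂ), 0) := by
  simp only [hmul, hdag, ofReal_hnorm, Prod.mk.injEq]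
  constructor <;> ring

lemma hmul_real_smul_right (r : ℝ) (h k : ℂ × ℂ) : hmul t h (r • k) = r • hmul t h k := by
  simp only [hmul, Prod.smul_fst, Prod.smul_snd, Complex.real_smul, map_mul,
    Complex.conj_ofReal, Prod.smul_mk, Prod.mk.injEq]
  constructor <;> ring

lemma hmul_real_smul_left (r : ℝ) (h k : ℂ × ℂ) : hmul t (r • h) k = r • hmul t h k := by
  simp only [hmul, Prod.smul_fst, Prod.smul_snd, Complex.real_smul, Prod.smul_mk, Prod.mk.injEq]
  constructor <;> ring

lemma hform_self (h : ℂ × ℂ) : hform t h h = hnorm t h := by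
  simp [hform, hmul_hdag_self]

lemma det_pit (h : ℂ × ℂ) : (pit t h).det = hnorm t h := by
  rw [pit, Matrix.det_fin_two_of, ofReal_hnorm]

lemma pit_hmul (h k : ℂ × ℂ) : pit t (hmul t h k) = pit t h * pit t k := by
  ext i j
  fin_cases i <;> fin_cases j <;>
    simp [pit, hmul, Matrix.mul_apply, Fin.sum_univ_two] <;> ring

lemma pit_one : pit t (1, 0) = 1 := by
  ext i j
  fin_cases i <;> fin_cases j <;> simp [pit]

lemma hnorm_ne_zero_of_hmul_eq_one {h k : ℂ × ℂ} (hk : hmul t h k = (1, 0)) : hnorm t h ≠ 0 := by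
  have hdet : (pit t h).det * (pit t k).det = 1 := by
    rw [← Matrix.det_mul, ← pit_hmul, hk, pit_one, Matrix.det_one]
  rw [det_pit] at hdet
  exact_mod_cast left_ne_zero_of_mul_eq_one hdet

lemma exists_inverse_of_hnorm_ne_zero {h : ℂ × ℂ} (hN : hnorm t h ≠ 0) :
    ∃ k, hmul t h k = (1, 0) ∧ hmul t k h = (1, 0) := by
  refine ⟨(hnorm t h)⁻¹ • hdag h, ?_, ?_⟩
  · rw [hmul_real_smul_right, hmul_hdag_self, Prod.smul_mk, smul_zero, Complex.real_smul,
      ← Complex.ofReal_mul, inv_mul_cancel₀ hN, Complex.ofReal_one]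
  · rw [hmul_real_smul_left, hdag_hmul_self, Prod.smul_mk, smul_zero, Complex.real_smul,
      ← Complex.ofReal_mul, inv_mul_cancel₀ hN, Complex.ofReal_one]

lemma exists_inverse_iff_hnorm_ne_zero (h : ℂ × ℂ) :
    (∃ k, hmul t h k = (1, 0) ∧ hmul t k h = (1, 0)) ↔ hnorm t h ≠ 0 :=
  ⟨fun ⟨_, hk, _⟩ ↦ hnorm_ne_zero_of_hmul_eq_one t hk, exists_inverse_of_hnorm_ne_zero t⟩

end

/-- `⟨h,h⟩_t = |a|² − t|b|² = det([h]_t)`, and `⟨h,h⟩_t = 0` iff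
`|a|² = t|b|²` iff `h` is not `·_t`-invertible. -/
theorem form_self_eq_det_and_singularity (t : ℝ) (a b : ℂ) :
    hform t (a, b) (a, b) = Complex.normSq a - t * Complex.normSq b ∧
    ((hform t (a, b) (a, b) : ℝ) : ℂ) = Matrix.det (pit t (a, b)) ∧
    (hform t (a, b) (a, b) = 0 ↔ Complex.normSq a = t * Complex.normSq b) ∧
    (hform t (a, b) (a, b) = 0 ↔
      ¬∃ k : ℂ × ℂ, hmul t (a, b) k = (1, 0) ∧ hmul t k (a, b) = (1, 0)) := by
  rw [exists_inverse_iff_hnorm_ne_zero, not_not, hform_self, det_pit]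
  exact ⟨rfl, rfl, sub_eq_zero, Iff.rfl⟩
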